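/- arXiv:0902.1284 — 2 statements merged into one kernel-verified Lean document; each statement's English description precedes it below -/
import Mathlib

section
/- Let y ∈ ℝ^d have coordinates sorted by magnitude, |y₁| ≥ |y₂| ≥ … ≥ |y_d|, let k ≥ 0 and ℓ ≥ 1 be integers, let Δ = y − y_{(1:k)}, and let A ∈ ℝ^{m×d} satisfy the (ℓ, δ)-restricted isometry property for some δ ∈ (0,1). Then ‖AΔ‖₂ ≤ (1+δ)^{1/2}·( ‖Δ‖₂ + ℓ^{−1/2}·‖Δ‖₁ ). -/
open Real MeasureTheory ProbabilityTheory

/-- The Euclidean (ℓ₂) norm of a vector in `ℝ^n`. -/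
noncomputable def l2 {n : ℕ} (v : Fin n → ℝ) : ℝ := Real.sqrt (∑ i, v i ^ 2)

/-- The ℓ₁ norm of a vector in `ℝ^n`. -/
def l1 {n : ℕ} (v : Fin n → ℝ) : ℝ := ∑ i, |v i|

/-- A vector is `k`-sparse if it has at most `k` nonzero entries. -/
def Sparse {n : ℕ} (k : ℕ) (v : Fin n → ℝ) : Prop :=
  (Finset.univ.filter fun i => v i ≠ 0).card ≤ k

/-- `(k,δ)`-restricted isometry property. -/
def RIP {m d : ℕ} (k : ℕ) (δ : ℝ) (A : Matrix (Fin m) (Fin d) ℝ) : Prop :=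
  ∀ x : Fin d → ℝ, Sparse k x →
    (1 - δ) * l2 x ^ 2 ≤ l2 (A.mulVec x) ^ 2 ∧ l2 (A.mulVec x) ^ 2 ≤ (1 + δ) * l2 x ^ 2

/-- `z` is a best `k`-sparse approximation `y_{(1:k)}` of `y`: it keeps the `k`
largest-magnitude coordinates of `y` (all coordinates if `k ≥ d`) and zeros the rest. -/
def IsBestApprox {d : ℕ} (k : ℕ) (y z : Fin d → ℝ) : Prop :=
  ∃ S : Finset (Fin d), S.card = min k d ∧
    (∀ i ∈ S, ∀ j ∉ S, |y j| ≤ |y i|) ∧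
    ∀ i, z i = if i ∈ S then y i else 0

/-!
Split the tail `Δ` into consecutive blocks of `ℓ` coordinates, starting at coordinate `k`. Each
block is `ℓ`-sparse, so the RIP and the triangle inequality give
`‖AΔ‖₂ ≤ √(1+δ) ∑ⱼ ‖Δ_{Bⱼ}‖₂`. The first block is bounded by `‖Δ‖₂`. Since `|Δ|` is
nonincreasing beyond `k`, every entry of block `j + 1` is at most the mean `‖Δ_{Bⱼ}‖₁ / ℓ` of
block `j`, so `‖Δ_{Bⱼ₊₁}‖₂ ≤ ‖Δ_{Bⱼ}‖₁ / √ℓ`, and these sum to at most `‖Δ‖₁ / √ℓ`.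
-/

open Finset Matrix

section Norms

variable {n : ℕ}

lemma l2_eq_norm (v : Fin n → ℝ) : l2 v = ‖WithLp.toLp 2 v‖ := by
  simp [l2, EuclideanSpace.norm_eq, sq_abs]

lemma l2_nonneg (v : Fin n → ℝ) : 0 ≤ l2 v := Real.sqrt_nonneg _

lemma l2_sum_le {ι : Type*} (s : Finset ι) (f : ι → Fin n → ℝ) :
    l2 (∑ j ∈ s, f j) ≤ ∑ j ∈ s, l2 (f j) := by
  simp only [l2_eq_norm, WithLp.toLp_sum]
  exact norm_sum_le s _

lemma l2_indicator (s : Finset (Fin n)) (v : Fin n → ℝ) :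
    l2 ((s : Set (Fin n)).indicator v) = √(∑ i ∈ s, v i ^ 2) := by
  rw [l2, ← sum_indicator_subset _ (subset_univ s)]
  simp only [Set.indicator_apply]
  congr 1
  refine sum_congr rfl fun i _ => ?_
  split_ifs <;> simp

lemma l2_indicator_le (s : Finset (Fin n)) (v : Fin n → ℝ) :
    l2 ((s : Set (Fin n)).indicator v) ≤ l2 v := by
  rw [l2_indicator, l2]
  exact Real.sqrt_le_sqrt (sum_le_sum_of_subset_of_nonneg (subset_univ s) fun _ _ _ => sq_nonneg _)

lemma sparse_indicator {k : ℕ} {s : Finset (Fin n)} (hs : #s ≤ k) (v : Fin n → ℝ) :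
    Sparse k ((s : Set (Fin n)).indicator v) :=
  (card_le_card fun _ hi => Set.mem_of_indicator_ne_zero (mem_filter.1 hi).2).trans hs

end Norms

lemma RIP.l2_mulVec_le {m d k : ℕ} {δ : ℝ} {A : Matrix (Fin m) (Fin d) ℝ} (hA : RIP k δ A)
    {x : Fin d → ℝ} (hx : Sparse k x) : l2 (A *ᵥ x) ≤ √(1 + δ) * l2 x := by
  rw [← Real.sqrt_sq (l2_nonneg (A *ᵥ x)), ← Real.sqrt_sq (l2_nonneg x),
    ← Real.sqrt_mul' _ (sq_nonneg _)]
  exact Real.sqrt_le_sqrt (hA x hx).2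

lemma sqrt_sum_sq_le_sum_abs_div_sqrt {ι : Type*} {s t : Finset ι} {v : ι → ℝ} {ℓ : ℕ}
    (hs : #s ≤ ℓ) (ht : ℓ ≤ #t) (hle : ∀ i ∈ s, ∀ j ∈ t, |v i| ≤ |v j|) :
    √(∑ i ∈ s, v i ^ 2) ≤ (∑ j ∈ t, |v j|) / √ℓ := by
  rcases Nat.eq_zero_or_pos ℓ with rfl | hℓ
  · simp [card_eq_zero.1 (Nat.le_zero.1 hs)]
  set S := ∑ j ∈ t, |v j|
  have hℓ' : (0 : ℝ) < ℓ := by exact_mod_cast hℓ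
  have hmax : ∀ i ∈ s, |v i| ≤ S / ℓ := by
    intro i hi
    rw [le_div_iff₀ hℓ']
    calc |v i| * ℓ ≤ |v i| * #t := by gcongr
      _ = ∑ _j ∈ t, |v i| := by rw [sum_const, nsmul_eq_mul, mul_comm]
      _ ≤ S := sum_le_sum (hle i hi)
  have hsq : ∑ i ∈ s, v i ^ 2 ≤ (S / √ℓ) ^ 2 :=
    calc ∑ i ∈ s, v i ^ 2 ≤ ∑ _i ∈ s, (S / ℓ) ^ 2 :=
          sum_le_sum fun i hi => by
            rw [← sq_abs]; exact pow_le_pow_left₀ (abs_nonneg _) (hmax i hi) 2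
      _ = #s * (S / ℓ) ^ 2 := by rw [sum_const, nsmul_eq_mul]
      _ ≤ ℓ * (S / ℓ) ^ 2 := by gcongr
      _ = (S / √ℓ) ^ 2 := by rw [div_pow, div_pow, sq_sqrt hℓ'.le]; field_simp
  exact (Real.sqrt_le_sqrt hsq).trans_eq (Real.sqrt_sq (by positivity))

section Blocks

variable {d : ℕ}

-- A fibre of `i ↦ (i - k) / ℓ`, so distinct blocks are disjoint by construction.
def tailBlock (k ℓ j : ℕ) : Finset (Fin d) := {i | k ≤ (i : ℕ) ∧ ((i : ℕ) - k) / ℓ = j}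

variable {k ℓ : ℕ}

lemma mem_tailBlock (hℓ : 0 < ℓ) {i : Fin d} {j : ℕ} :
    i ∈ tailBlock k ℓ j ↔ k + j * ℓ ≤ i ∧ (i : ℕ) < k + j * ℓ + ℓ := by
  simp only [tailBlock, mem_filter, mem_univ, true_and, Nat.div_eq_iff hℓ]
  omega

lemma card_tailBlock_le (hℓ : 0 < ℓ) (j : ℕ) : #(tailBlock k ℓ j : Finset (Fin d)) ≤ ℓ :=
  calc #(tailBlock k ℓ j : Finset (Fin d)) ≤ #(Ico (k + j * ℓ) (k + j * ℓ + ℓ)) :=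
        card_le_card_of_injOn Fin.val
          (fun i hi => by simpa [mem_Ico] using (mem_tailBlock hℓ).1 hi) Fin.val_injective.injOn
    _ = ℓ := by simp

lemma le_card_tailBlock (hℓ : 0 < ℓ) {i : Fin d} {j : ℕ} (hi : i ∈ tailBlock k ℓ (j + 1)) :
    ℓ ≤ #(tailBlock k ℓ j : Finset (Fin d)) := by
  rw [mem_tailBlock hℓ] at hi
  calc ℓ = #(Ico (k + j * ℓ) (k + j * ℓ + ℓ)) := by simp
    _ ≤ #((tailBlock k ℓ j : Finset (Fin d)).image Fin.val) := card_le_card fun t ht => by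
        rw [mem_Ico] at ht
        have htd : t < d := by linarith [i.isLt, add_one_mul j ℓ]
        exact mem_image.2 ⟨⟨t, htd⟩, (mem_tailBlock hℓ).2 ht, rfl⟩
    _ ≤ _ := card_image_le

lemma lt_of_mem_tailBlock_succ (hℓ : 0 < ℓ) {i t : Fin d} {j : ℕ}
    (hi : i ∈ tailBlock k ℓ (j + 1)) (ht : t ∈ tailBlock k ℓ j) : t < i := by
  rw [mem_tailBlock hℓ] at hi ht
  rw [Fin.lt_def]
  linarith [add_one_mul j ℓ]

lemma sum_indicator_tailBlock {N : ℕ} (hN : d ≤ N) (v : Fin d → ℝ)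
    (hv : ∀ i : Fin d, (i : ℕ) < k → v i = 0) :
    ∑ j ∈ range N, ((tailBlock k ℓ j : Finset (Fin d)) : Set (Fin d)).indicator v = v := by
  ext i
  simp only [Finset.sum_apply, Set.indicator_apply, tailBlock, coe_filter, mem_univ, true_and,
    Set.mem_ofPred_eq]
  by_cases hik : k ≤ (i : ℕ)
  · have hj : ((i : ℕ) - k) / ℓ ∈ range N :=
      mem_range.2 ((Nat.div_le_self _ _).trans_lt (by omega))
    simp only [hik, true_and, sum_ite_eq, if_pos hj]
  · simp [hik, hv i (by omega)]

lemma sum_sum_abs_tailBlock_le (s : Finset ℕ) (v : Fin d → ℝ) :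
    ∑ j ∈ s, ∑ i ∈ tailBlock k ℓ j, |v i| ≤ l1 v := by
  simp only [tailBlock, ← filter_filter]
  refine (sum_fiberwise_le_sum_of_sum_fiber_nonneg fun _ _ => ?_).trans ?_
  · exact sum_nonneg fun _ _ => abs_nonneg _
  · exact sum_le_sum_of_subset_of_nonneg (subset_univ _) fun _ _ _ => abs_nonneg _

lemma l2_indicator_tailBlock_succ_le (hℓ : 0 < ℓ) {v : Fin d → ℝ}
    (hv : ∀ i j : Fin d, k ≤ (i : ℕ) → i ≤ j → |v j| ≤ |v i|) (j : ℕ) :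
    l2 (((tailBlock k ℓ (j + 1) : Finset (Fin d)) : Set (Fin d)).indicator v) ≤
      (∑ i ∈ tailBlock k ℓ j, |v i|) / √ℓ := by
  rw [l2_indicator]
  rcases (tailBlock k ℓ (j + 1) : Finset (Fin d)).eq_empty_or_nonempty with hempty | ⟨i, hi⟩
  · rw [hempty, sum_empty, Real.sqrt_zero]
    positivity
  refine sqrt_sum_sq_le_sum_abs_div_sqrt (card_tailBlock_le hℓ _) (le_card_tailBlock hℓ hi)
    fun i' hi' t ht => hv t i' ?_ (lt_of_mem_tailBlock_succ hℓ hi' ht).le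
  exact ((mem_tailBlock hℓ).1 ht).1.trans' (Nat.le_add_right _ _)

lemma sum_l2_indicator_tailBlock_le (hℓ : 0 < ℓ) {v : Fin d → ℝ}
    (hv : ∀ i j : Fin d, k ≤ (i : ℕ) → i ≤ j → |v j| ≤ |v i|) (N : ℕ) :
    ∑ j ∈ range (N + 1), l2 (((tailBlock k ℓ j : Finset (Fin d)) : Set (Fin d)).indicator v) ≤
      l2 v + l1 v / √ℓ := by
  rw [sum_range_succ']
  have htail := sum_le_sum fun j (_ : j ∈ range N) => l2_indicator_tailBlock_succ_le hℓ hv j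
  rw [← sum_div] at htail
  have hl1 := div_le_div_of_nonneg_right (sum_sum_abs_tailBlock_le (k := k) (ℓ := ℓ) (range N) v)
    (Real.sqrt_nonneg ℓ)
  linarith [l2_indicator_le (tailBlock k ℓ 0 : Finset (Fin d)) v]

end Blocks

theorem stmt_9_general {m d : ℕ} (y : Fin d → ℝ)
    (hsorted : ∀ i j : Fin d, i ≤ j → |y j| ≤ |y i|)
    (k ℓ : ℕ) (hℓ : 1 ≤ ℓ)
    (Δ : Fin d → ℝ) (hΔ : ∀ j : Fin d, Δ j = if (j : ℕ) < k then 0 else y j)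
    (A : Matrix (Fin m) (Fin d) ℝ)
    {δ : ℝ} (hA : RIP ℓ δ A) :
    l2 (A.mulVec Δ) ≤ Real.sqrt (1 + δ) * (l2 Δ + (1 / Real.sqrt ℓ) * l1 Δ) := by
  have hΔ0 : ∀ i : Fin d, (i : ℕ) < k → Δ i = 0 := fun i hi => by rw [hΔ, if_pos hi]
  have hΔanti : ∀ i j : Fin d, k ≤ (i : ℕ) → i ≤ j → |Δ j| ≤ |Δ i| := fun i j hki hij => by
    rw [hΔ, hΔ, if_neg (by omega), if_neg (by omega)]
    exact hsorted i j hij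
  set D : ℕ → Fin d → ℝ := fun j => ((tailBlock k ℓ j : Finset (Fin d)) : Set (Fin d)).indicator Δ
  calc l2 (A *ᵥ Δ) = l2 (∑ j ∈ range (d + 1), A *ᵥ D j) := by
        rw [← mulVec_sum, sum_indicator_tailBlock (Nat.le_succ d) Δ hΔ0]
    _ ≤ ∑ j ∈ range (d + 1), l2 (A *ᵥ D j) := l2_sum_le _ _
    _ ≤ ∑ j ∈ range (d + 1), √(1 + δ) * l2 (D j) :=
        sum_le_sum fun j _ => hA.l2_mulVec_le (sparse_indicator (card_tailBlock_le hℓ j) Δ)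
    _ = √(1 + δ) * ∑ j ∈ range (d + 1), l2 (D j) := (mul_sum _ _ _).symm
    _ ≤ √(1 + δ) * (l2 Δ + l1 Δ / √ℓ) := by
        gcongr
        exact sum_l2_indicator_tailBlock_le hℓ hΔanti d
    _ = √(1 + δ) * (l2 Δ + (1 / √ℓ) * l1 Δ) := by rw [one_div_mul_eq_div]

/-- bound on `‖AΔ‖₂` for an `(ℓ,δ)`-RIP matrix, from the proof of
Theorem 1.  Coordinates are 0-indexed and sorted by decreasing magnitude, so
`y_{(1:k)}` keeps coordinates `0,…,k−1` and `Δ = y − y_{(1:k)}` keeps the rest. -/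
theorem stmt_9 {m d : ℕ} (y : Fin d → ℝ)
    (hsorted : ∀ i j : Fin d, i ≤ j → |y j| ≤ |y i|)
    (k ℓ : ℕ) (hℓ : 1 ≤ ℓ)
    (Δ : Fin d → ℝ) (hΔ : ∀ j : Fin d, Δ j = if (j : ℕ) < k then 0 else y j)
    (A : Matrix (Fin m) (Fin d) ℝ)
    {δ : ℝ} (hδ0 : 0 < δ) (hδ1 : δ < 1) (hA : RIP ℓ δ A) :
    l2 (A.mulVec Δ) ≤ Real.sqrt (1 + δ) * (l2 Δ + (1 / Real.sqrt ℓ) * l1 Δ) :=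
  stmt_9_general y hsorted k ℓ hℓ Δ hΔ A hA
end

section
/- Let k ≥ 1, let A = [a₁ | … | a_d] ∈ ℝ^{m×d} have unit ℓ₂-norm columns with coherence μ(A) ≤ 0.1/k, where d > 2k. Let h ∈ ℝ^m, and let ŷ', y' ∈ ℝ^d be vectors both supported on {1, …, 2k}. Set r = h − Ay' and r̂ = h − Aŷ', and suppose j > 2k is an index such that |a_jᵀ r̂| ≥ |a_ℓᵀ r̂| for every ℓ ≤ 2k. Then ‖A(ŷ' − y')‖₂² ≤ 4·‖r‖₂² + 10k·(a_jᵀ r)². -/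
open Real MeasureTheory ProbabilityTheory

/-! With `u = ŷ' - y'` the two residuals differ by `Au = r - r̂`. Because `u` lives on `s = 2k`
columns and `μ s ≤ 1/5`, the Gram matrix on its support is close to the identity:
`‖u‖₂² ≤ ‖Au‖₂² + μ ‖u‖₁²` and `‖u‖₁² ≤ s ‖u‖₂²` give `‖u‖₁² ≤ (5/4) s ‖Au‖₂²`.
Now `‖Au‖₂² = ⟨Au, r⟩ - ⟨u, Aᵀ r̂⟩`; the greedy choice of `j` bounds the last term by
`‖u‖₁ |a_jᵀ r̂|`, and `|a_jᵀ r̂| ≤ |a_jᵀ r| + μ ‖u‖₁` since `j` is off the support. Hence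
`(3/4) ‖Au‖₂² ≤ ‖Au‖₂ ‖r‖₂ + ‖u‖₁ |a_jᵀ r|`, which squares to the claim. -/

open Matrix Finset

lemma le_of_three_quarters_le_add_mul {V P R L T s : ℝ} (hV : 0 ≤ V) (hR : 0 ≤ R) (hs : 0 ≤ s)
    (hP : P ^ 2 ≤ V * R) (hL : L ^ 2 ≤ 5 / 4 * s * V) (h : 3 / 4 * V ≤ P + L * T) :
    V ≤ 4 * R + 5 * s * T ^ 2 := by
  have hsT : 0 ≤ s * T ^ 2 := by positivity
  rcases hV.eq_or_lt with rfl | hVpos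
  · positivity
  have hsq : V * (9 / 16 * V) ≤ V * (2 * R + 5 / 2 * s * T ^ 2) := by
    nlinarith [sq_nonneg (P - L * T), mul_le_mul_of_nonneg_right hL (sq_nonneg T)]
  linarith [le_of_mul_le_mul_left hsq hVpos]

section Coherence

variable {κ ι : Type*} [Fintype κ] [Fintype ι]

lemma abs_dotProduct_le_sum_abs_mul {u x : ι → ℝ} {M : ℝ} (hx : ∀ c, u c ≠ 0 → |x c| ≤ M) :
    |u ⬝ᵥ x| ≤ (∑ c, |u c|) * M := by
  calc |u ⬝ᵥ x| ≤ ∑ c, |u c| * |x c| := by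
        simpa only [dotProduct, abs_mul] using abs_sum_le_sum_abs (fun c => u c * x c) univ
    _ ≤ ∑ c, |u c| * M := sum_le_sum fun c _ => by
        by_cases hc : u c = 0
        · simp [hc]
        · exact mul_le_mul_of_nonneg_left (hx c hc) (abs_nonneg _)
    _ = (∑ c, |u c|) * M := (sum_mul ..).symm

lemma sq_sum_abs_le_card_mul_sum_sq {u : ι → ℝ} {S : Finset ι} (hu : ∀ c ∉ S, u c = 0) :
    (∑ c, |u c|) ^ 2 ≤ #S * ∑ c, u c ^ 2 := by
  have hsupp : ∀ f : ℝ → ℝ, f 0 = 0 → ∑ c, f (u c) = ∑ c ∈ S, f (u c) := fun f hf =>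
    (sum_subset (subset_univ S) fun c _ hc => by rw [hu c hc, hf]).symm
  rw [hsupp _ abs_zero, hsupp (· ^ 2) (zero_pow two_ne_zero)]
  simpa only [sq_abs] using sq_sum_le_card_mul_sum_sq (s := S) (f := fun c => |u c|)

lemma sum_sq_mulVec_eq_sum_sum (A : Matrix κ ι ℝ) (u : ι → ℝ) :
    ∑ i, (A *ᵥ u) i ^ 2 = ∑ c, ∑ c', u c * u c' * (Aᵀ c ⬝ᵥ Aᵀ c') := by
  simp only [sq, mulVec, dotProduct, transpose_apply, sum_mul_sum]
  simp only [mul_sum]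
  rw [sum_comm]
  refine sum_congr rfl fun c _ => ?_
  rw [sum_comm]
  exact sum_congr rfl fun c' _ => sum_congr rfl fun i _ => by ring

variable {A : Matrix κ ι ℝ} {μ : ℝ}

lemma sum_sq_le_sum_sq_mulVec_add (hμ : 0 ≤ μ) (hunit : ∀ c, ∑ i, A i c ^ 2 = 1)
    (hcoh : ∀ c c', c ≠ c' → |Aᵀ c ⬝ᵥ Aᵀ c'| ≤ μ) (u : ι → ℝ) :
    ∑ c, u c ^ 2 ≤ ∑ i, (A *ᵥ u) i ^ 2 + μ * (∑ c, |u c|) ^ 2 := by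
  classical
  have hterm : ∀ c c', (if c = c' then u c ^ 2 else 0) ≤
      u c * u c' * (Aᵀ c ⬝ᵥ Aᵀ c') + μ * (|u c| * |u c'|) := by
    intro c c'
    split_ifs with hcc
    · subst hcc
      have hdiag : Aᵀ c ⬝ᵥ Aᵀ c = 1 := by simpa only [dotProduct, transpose_apply, sq] using hunit c
      rw [hdiag, abs_mul_abs_self]
      nlinarith [sq_nonneg (u c)]
    · have := mul_le_mul_of_nonneg_left (hcoh c c' hcc) (abs_nonneg (u c * u c'))
      rw [← abs_mul, abs_mul (u c)] at this
      linarith [neg_abs_le (u c * u c' * (Aᵀ c ⬝ᵥ Aᵀ c'))]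
  calc ∑ c, u c ^ 2 = ∑ c, ∑ c', if c = c' then u c ^ 2 else 0 := by simp
    _ ≤ ∑ c, ∑ c', (u c * u c' * (Aᵀ c ⬝ᵥ Aᵀ c') + μ * (|u c| * |u c'|)) := by
        gcongr with c _ c' _
        exact hterm c c'
    _ = ∑ i, (A *ᵥ u) i ^ 2 + μ * (∑ c, |u c|) ^ 2 := by
        rw [sum_sq_mulVec_eq_sum_sum, sq, sum_mul_sum, mul_sum]
        simp only [sum_add_distrib, mul_sum]

lemma abs_col_dotProduct_mulVec_le (hcoh : ∀ c c', c ≠ c' → |Aᵀ c ⬝ᵥ Aᵀ c'| ≤ μ)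
    {u : ι → ℝ} {j : ι} (hj : u j = 0) :
    |Aᵀ j ⬝ᵥ A *ᵥ u| ≤ (∑ c, |u c|) * μ := by
  rw [dotProduct_mulVec, dotProduct_comm]
  exact abs_dotProduct_le_sum_abs_mul fun c hc => hcoh j c (ne_of_apply_ne u (hj ▸ hc.symm))

theorem sum_sq_mulVec_le_of_omp_selection (hμ : 0 ≤ μ) (hunit : ∀ c, ∑ i, A i c ^ 2 = 1)
    (hcoh : ∀ c c', c ≠ c' → |Aᵀ c ⬝ᵥ Aᵀ c'| ≤ μ) {S : Finset ι} {s : ℝ} (hS : #S ≤ s)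
    (hμs : μ * s ≤ 1 / 5) {u : ι → ℝ} (hu : ∀ c ∉ S, u c = 0) {r r' : κ → ℝ}
    (hrr' : r - r' = A *ᵥ u) {j : ι} (hj : j ∉ S)
    (hmax : ∀ c ∈ S, |Aᵀ c ⬝ᵥ r'| ≤ |Aᵀ j ⬝ᵥ r'|) :
    ∑ i, (A *ᵥ u) i ^ 2 ≤ 4 * ∑ i, r i ^ 2 + 5 * s * (Aᵀ j ⬝ᵥ r) ^ 2 := by
  set L := ∑ c, |u c|
  set V := ∑ i, (A *ᵥ u) i ^ 2
  have hL0 : 0 ≤ L := sum_nonneg fun c _ => abs_nonneg _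
  have hU0 : 0 ≤ ∑ c, u c ^ 2 := sum_nonneg fun c _ => sq_nonneg _
  have hs : 0 ≤ s := (Nat.cast_nonneg _).trans hS
  have hLU : L ^ 2 ≤ s * ∑ c, u c ^ 2 :=
    (sq_sum_abs_le_card_mul_sum_sq hu).trans (mul_le_mul_of_nonneg_right hS hU0)
  have hgram := sum_sq_le_sum_sq_mulVec_add hμ hunit hcoh u
  have hμL : μ * L ^ 2 ≤ V / 4 := by
    nlinarith [mul_le_mul_of_nonneg_left hLU hμ, mul_le_mul_of_nonneg_right hμs hU0]
  have hLV : L ^ 2 ≤ 5 / 4 * s * V := by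
    nlinarith [mul_le_mul_of_nonneg_left (show ∑ c, u c ^ 2 ≤ 5 / 4 * V by linarith) hs]
  have hV : V = A *ᵥ u ⬝ᵥ r - A *ᵥ u ⬝ᵥ r' := by
    rw [← dotProduct_sub, hrr']
    simp only [V, dotProduct, sq]
  have hr'u : |A *ᵥ u ⬝ᵥ r'| ≤ L * |Aᵀ j ⬝ᵥ r'| := by
    rw [dotProduct_comm, dotProduct_mulVec, dotProduct_comm, ← mulVec_transpose]
    exact abs_dotProduct_le_sum_abs_mul fun c hc => hmax c (by_contra fun hcS => hc (hu c hcS))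
  have hr' : |Aᵀ j ⬝ᵥ r'| ≤ |Aᵀ j ⬝ᵥ r| + L * μ := by
    rw [show r' = r - A *ᵥ u by rw [← hrr', sub_sub_cancel], dotProduct_sub]
    exact (abs_sub _ _).trans (add_le_add_right (abs_col_dotProduct_mulVec_le hcoh (hu j hj)) _)
  refine le_of_three_quarters_le_add_mul (P := A *ᵥ u ⬝ᵥ r) (L := L) (T := |Aᵀ j ⬝ᵥ r|)
    (sum_nonneg fun i _ => sq_nonneg _) (sum_nonneg fun i _ => sq_nonneg _) hs
    (sum_mul_sq_le_sq_mul_sq _ _ _) hLV ?_ |>.trans_eq (by rw [sq_abs])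
  nlinarith [neg_abs_le (A *ᵥ u ⬝ᵥ r'), mul_le_mul_of_nonneg_left hr' hL0]

end Coherence

lemma l2_sq {n : ℕ} (v : Fin n → ℝ) : l2 v ^ 2 = ∑ i, v i ^ 2 :=
  Real.sq_sqrt (sum_nonneg fun _ _ => sq_nonneg _)

/-- Coordinates are 0-indexed: "supported on `{1,…,2k}`" becomes "supported on the
first `2k` coordinates". -/
theorem stmt_11_general {m d k : ℕ}
    (A : Matrix (Fin m) (Fin d) ℝ)
    (hcols : ∀ j : Fin d, l2 (fun i => A i j) = 1)
    (hcoh : ∀ j j' : Fin d, j ≠ j' → |∑ i, A i j * A i j'| ≤ 0.1 / (k : ℝ))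
    (h : Fin m → ℝ) (yhat' y' : Fin d → ℝ)
    (hyhat'supp : ∀ c : Fin d, 2 * k ≤ (c : ℕ) → yhat' c = 0)
    (hy'supp : ∀ c : Fin d, 2 * k ≤ (c : ℕ) → y' c = 0)
    (r rhat : Fin m → ℝ)
    (hr : r = h - A.mulVec y') (hrhat : rhat = h - A.mulVec yhat')
    (j : Fin d) (hj : 2 * k ≤ (j : ℕ))
    (hmax : ∀ c : Fin d, (c : ℕ) < 2 * k →
      |∑ i, A i c * rhat i| ≤ |∑ i, A i j * rhat i|) :
    l2 (A.mulVec (yhat' - y')) ^ 2 ≤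
      4 * l2 r ^ 2 + 10 * (k : ℝ) * (∑ i, A i j * r i) ^ 2 := by
  have hunit : ∀ c, ∑ i, A i c ^ 2 = 1 := fun c => Real.sqrt_eq_one.mp (hcols c)
  have hcard : (#{c : Fin d | (c : ℕ) < 2 * k} : ℝ) ≤ 2 * k := by
    rw [Fin.card_filter_val_lt]
    exact_mod_cast min_le_right _ _
  -- `k / k ≤ 1` also covers `k = 0`, where `0.1 / k = 0`.
  have hμs : 0.1 / (k : ℝ) * (2 * k) ≤ 1 / 5 := by
    calc 0.1 / (k : ℝ) * (2 * k) = 1 / 5 * (k / k) := by ring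
      _ ≤ 1 / 5 := mul_le_of_le_one_right (by norm_num) (div_self_le_one _)
  have hsupp : ∀ c ∉ ({c : Fin d | (c : ℕ) < 2 * k} : Finset _), (yhat' - y') c = 0 := by
    intro c hc
    simp only [mem_filter, mem_univ, true_and, not_lt] at hc
    simp [hyhat'supp c hc, hy'supp c hc]
  have hrr : r - rhat = A *ᵥ (yhat' - y') := by
    rw [hr, hrhat, mulVec_sub]
    abel
  have key := sum_sq_mulVec_le_of_omp_selection (by positivity) hunit hcoh hcard hμs hsupp hrr
    (j := j) (by simpa using hj) (fun c hc => hmax c (by simpa using hc))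
  rw [l2_sq, l2_sq, show 10 * (k : ℝ) = 5 * (2 * k) by ring]
  exact key

/-- key intermediate inequality in the proof of Theorem 2.
Coordinates are 0-indexed: "supported on `{1,…,2k}`" becomes "supported on the
first `2k` coordinates", and the selected column `j` lies outside them. -/
theorem stmt_11 {m d k : ℕ} (hk : 1 ≤ k) (hd : 2 * k < d)
    (A : Matrix (Fin m) (Fin d) ℝ)
    (hcols : ∀ j : Fin d, l2 (fun i => A i j) = 1)
    (hcoh : ∀ j j' : Fin d, j ≠ j' → |∑ i, A i j * A i j'| ≤ 0.1 / (k : ℝ))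
    (h : Fin m → ℝ) (yhat' y' : Fin d → ℝ)
    (hyhat'supp : ∀ c : Fin d, 2 * k ≤ (c : ℕ) → yhat' c = 0)
    (hy'supp : ∀ c : Fin d, 2 * k ≤ (c : ℕ) → y' c = 0)
    (r rhat : Fin m → ℝ)
    (hr : r = h - A.mulVec y') (hrhat : rhat = h - A.mulVec yhat')
    (j : Fin d) (hj : 2 * k ≤ (j : ℕ))
    (hmax : ∀ c : Fin d, (c : ℕ) < 2 * k →
      |∑ i, A i c * rhat i| ≤ |∑ i, A i j * rhat i|) :
    l2 (A.mulVec (yhat' - y')) ^ 2 ≤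
      4 * l2 r ^ 2 + 10 * (k : ℝ) * (∑ i, A i j * r i) ^ 2 :=
  stmt_11_general A hcols hcoh h yhat' y' hyhat'supp hy'supp r rhat hr hrhat j hj hmax
end
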